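/- In the static game with zero initial loads, the proportional allocation a_{ij} = μ_j/(∑_{k=1}^m μ_k) for all players i is a pure Nash equilibrium. -/
import Mathlib


open Finset

/-- Player `i`'s cost in the static load balancing game with zero initial loads. -/
noncomputable def staticCost0 {n m : ℕ} (lam : Fin n → ℝ) (μ : Fin m → ℝ)
    (a : Fin n → Fin m → ℝ) (i : Fin n) : ℝ :=
  ∑ j, lam i * a i j *
    (lam i * a i j / (2 * μ j) + (∑ k ∈ univ.erase i, lam k * a k j) / μ j)

/-- With zero initial loads, the proportional allocation `a_{ij} = μ_j/∑_k μ_k` for all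
players is a pure Nash equilibrium. -/
theorem proportional_allocation_is_NE {n m : ℕ} (lam : Fin n → ℝ) (μ : Fin m → ℝ)
    (hμ : ∀ j, 0 < μ j) (hlam : ∀ i, 0 < lam i)
    (a : Fin n → Fin m → ℝ) (ha : ∀ i j, a i j = μ j / ∑ k, μ k) :
    ∀ i : Fin n, ∀ b : Fin m → ℝ, (∀ j, 0 ≤ b j) → (∑ j, b j = 1) →
      staticCost0 lam μ a i ≤ staticCost0 lam μ (Function.update a i b) i := by
  intro i b hb hb1
  rcases Nat.eq_zero_or_pos m with hm | hm
  · subst hm; simp at hb1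
  have hne : (univ : Finset (Fin m)).Nonempty :=
    @univ_nonempty _ _ (Fin.pos_iff_nonempty.mp hm)
  set S := ∑ k, μ k with hSdef
  have hS : 0 < S := Finset.sum_pos (fun j _ => hμ j) hne
  set L := ∑ k ∈ univ.erase i, lam k with hL
  have herase : ∀ j, (∑ k ∈ univ.erase i, lam k * a k j) = L * (μ j / S) := by
    intro j
    rw [hL, Finset.sum_mul]
    exact Finset.sum_congr rfl fun k _ => by rw [ha k j]
  have herase' : ∀ j,
      (∑ k ∈ univ.erase i, lam k * Function.update a i b k j) = L * (μ j / S) := by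
    intro j
    rw [← herase j]
    exact Finset.sum_congr rfl fun k hk => by
      rw [Function.update_of_ne (Finset.ne_of_mem_erase hk)]
  have key : staticCost0 lam μ (Function.update a i b) i - staticCost0 lam μ a i
      = (lam i)^2/2 * ∑ j, (b j - μ j / S)^2 / μ j
        + ((lam i)^2 + lam i * L)/S * ∑ j, (b j - μ j / S) := by
    unfold staticCost0
    rw [Finset.mul_sum, Finset.mul_sum, ← Finset.sum_sub_distrib,
      ← Finset.sum_add_distrib]
    refine Finset.sum_congr rfl fun j _ => ?_
    rw [herase j, herase' j, Function.update_self, ha i j]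
    have h1 : μ j ≠ 0 := (hμ j).ne'
    have h2 : S ≠ 0 := hS.ne'
    field_simp
    ring
  have hzero : ∑ j, (b j - μ j / S) = 0 := by
    rw [Finset.sum_sub_distrib, hb1, ← Finset.sum_div, ← hSdef, div_self hS.ne']
    ring
  have hnn : 0 ≤ ∑ j, (b j - μ j / S)^2 / μ j :=
    Finset.sum_nonneg fun j _ => div_nonneg (sq_nonneg _) (hμ j).le
  rw [hzero, mul_zero, add_zero] at key
  have : 0 ≤ (lam i)^2/2 * ∑ j, (b j - μ j / S)^2 / μ j :=
    mul_nonneg (by positivity) hnn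
  linarith
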